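/- arXiv:0812.2740 — 4 statements merged into one kernel-verified Lean document; each statement's English description precedes it below -/
import Mathlib

section
/- Let d ∈ {1, 2} and let α ≥ 0 be a real number, with α ≤ 1 when d = 1 and α < 1 when d = 2. Then there exists a constant C > 0 such that for every P ∈ ℝ^d, ∫_{ℝ^d × ℝ^d} ⟨P − y − z⟩^{-(2-2α)} ⟨y⟩^{-2} ⟨z⟩^{-2} dy dz ≤ C; that is, sup_{P ∈ ℝ^d} of this double integral is finite. -/
open MeasureTheory
open scoped ENNReal NNReal

/-- The Japanese bracket `⟨x⟩ = (1 + ‖x‖²)^{1/2}` on `ℝ^d`. -/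
noncomputable def jap {d : ℕ} (x : EuclideanSpace ℝ (Fin d)) : ℝ :=
  (1 + ‖x‖ ^ 2) ^ ((1 : ℝ) / 2)

section Aux

variable {d : ℕ}

local notation "E" => EuclideanSpace ℝ (Fin d)

lemma one_le_jap (x : E) : 1 ≤ jap x := by
  have h : (1:ℝ) ≤ 1 + ‖x‖ ^ 2 := le_add_of_nonneg_right (by positivity)
  calc (1:ℝ) = 1 ^ ((1:ℝ)/2) := (Real.one_rpow _).symm
  _ ≤ (1 + ‖x‖^2) ^ ((1:ℝ)/2) := Real.rpow_le_rpow zero_le_one h (by norm_num)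

lemma jap_pos (x : E) : 0 < jap x := lt_of_lt_of_le one_pos (one_le_jap x)

lemma jr_nonneg (r : ℝ) (x : E) : 0 ≤ jap x ^ r := Real.rpow_nonneg (jap_pos x).le r

lemma jr_le_one {r : ℝ} (hr : 0 ≤ r) (x : E) : jap x ^ (-r) ≤ 1 :=
  Real.rpow_le_one_of_one_le_of_nonpos (one_le_jap x) (neg_nonpos.mpr hr)

lemma jap_mono {x y : E} (h : ‖x‖ ≤ ‖y‖) : jap x ≤ jap y :=
  Real.rpow_le_rpow (by positivity) (by nlinarith [norm_nonneg x]) (by norm_num)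

lemma jr_anti {r : ℝ} (hr : 0 ≤ r) {x y : E} (h : jap x ≤ jap y) :
    jap y ^ (-r) ≤ jap x ^ (-r) :=
  Real.rpow_le_rpow_of_nonpos (jap_pos x) h (neg_nonpos.2 hr)

lemma four_rpow_half : (4:ℝ) ^ ((1:ℝ)/2) = 2 := by
  rw [show (4:ℝ) = 2 ^ (2:ℕ) by norm_num, ← Real.rpow_natCast 2 2, ← Real.rpow_mul (by norm_num)]
  norm_num

lemma jap_le_two_mul {x y : E} (h : ‖x‖ ≤ 2 * ‖y‖) : jap x ≤ 2 * jap y := by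
  have h4 : (1:ℝ) + ‖x‖^2 ≤ 4 * (1 + ‖y‖^2) := by nlinarith [norm_nonneg x, norm_nonneg y]
  calc jap x ≤ (4 * (1 + ‖y‖^2)) ^ ((1:ℝ)/2) :=
        Real.rpow_le_rpow (by positivity) h4 (by norm_num)
  _ = 4 ^ ((1:ℝ)/2) * (1+‖y‖^2)^((1:ℝ)/2) := Real.mul_rpow (by norm_num) (by positivity)
  _ = 2 * jap y := by rw [four_rpow_half]; rfl

lemma half_jap_rpow {x : E} {r : ℝ} : (jap x / 2) ^ (-r) = 2 ^ r * jap x ^ (-r) := by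
  rw [Real.div_rpow (jap_pos x).le (by norm_num), Real.rpow_neg (by norm_num : (0:ℝ) ≤ 2),
    div_eq_mul_inv, inv_inv, mul_comm]

lemma norm_le_of_sub {x y : E} : ‖x‖ ≤ ‖x - y‖ + ‖y‖ := by
  have := norm_add_le (x - y) y
  rwa [sub_add_cancel] at this

/-- Pointwise estimate used for the weighted convolution bound. -/
lemma ptA {s b a : ℝ} (hs : 0 ≤ s) (hsb : s ≤ b) (hba : b ≤ a) (x y : E) :
    jap (x - y) ^ (-s) * jap y ^ (-a)
      ≤ 2 ^ b * jap x ^ (-s) * (jap y ^ (-a) + jap (x - y) ^ (-(a - b + s))) := by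
  have hb : 0 ≤ b := hs.trans hsb
  have hjx := jap_pos x
  rcases le_total ‖y‖ ‖x - y‖ with hc | hc
  · have hx2 : ‖x‖ ≤ 2 * ‖x - y‖ := by
      have := norm_le_of_sub (x := x) (y := y); linarith
    have h1 : jap x ≤ 2 * jap (x - y) := jap_le_two_mul hx2
    have h2 : jap (x - y) ^ (-s) ≤ 2 ^ s * jap x ^ (-s) := by
      have h3 : jap (x - y) ^ (-s) ≤ (jap x / 2) ^ (-s) :=
        Real.rpow_le_rpow_of_nonpos (by linarith) (by linarith) (neg_nonpos.2 hs)
      rwa [half_jap_rpow] at h3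
    have h4 : (2:ℝ) ^ s ≤ 2 ^ b := Real.rpow_le_rpow_of_exponent_le one_le_two hsb
    have h5 : 0 ≤ jap y ^ (-a) := jr_nonneg _ _
    have h6 : 0 ≤ jap (x - y) ^ (-(a - b + s)) := jr_nonneg _ _
    have h7 : 0 ≤ jap x ^ (-s) := jr_nonneg _ _
    calc jap (x - y) ^ (-s) * jap y ^ (-a) ≤ (2 ^ s * jap x ^ (-s)) * jap y ^ (-a) :=
          mul_le_mul_of_nonneg_right h2 h5
    _ ≤ (2 ^ b * jap x ^ (-s)) * jap y ^ (-a) := by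
          apply mul_le_mul_of_nonneg_right (mul_le_mul_of_nonneg_right h4 h7) h5
    _ ≤ 2 ^ b * jap x ^ (-s) * (jap y ^ (-a) + jap (x - y) ^ (-(a - b + s))) := by
          apply mul_le_mul_of_nonneg_left (le_add_of_nonneg_right h6) (by positivity)
  · have hx2 : ‖x‖ ≤ 2 * ‖y‖ := by
      have := norm_le_of_sub (x := x) (y := y); linarith
    have h1 : jap x ≤ 2 * jap y := jap_le_two_mul hx2
    have hxy : jap (x - y) ≤ jap y := jap_mono hc
    have hsplit : jap y ^ (-a) = jap y ^ (-b) * jap y ^ (-(a - b)) := by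
      rw [← Real.rpow_add (jap_pos y)]; ring_nf
    have h2 : jap y ^ (-b) ≤ 2 ^ b * jap x ^ (-s) := by
      have h3 : jap y ^ (-b) ≤ (jap x / 2) ^ (-b) :=
        Real.rpow_le_rpow_of_nonpos (by linarith) (by linarith) (neg_nonpos.2 hb)
      rw [half_jap_rpow] at h3
      have h5 : jap x ^ (-b) ≤ jap x ^ (-s) :=
        Real.rpow_le_rpow_of_exponent_le (one_le_jap x) (by linarith)
      calc jap y ^ (-b) ≤ 2 ^ b * jap x ^ (-b) := h3
      _ ≤ 2 ^ b * jap x ^ (-s) := by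
          apply mul_le_mul_of_nonneg_left h5 (by positivity)
    have h6 : jap y ^ (-(a - b)) ≤ jap (x - y) ^ (-(a - b)) := jr_anti (by linarith) hxy
    have h7 : 0 ≤ jap (x - y) ^ (-s) := jr_nonneg _ _
    calc jap (x - y) ^ (-s) * jap y ^ (-a)
        = jap y ^ (-b) * (jap (x - y) ^ (-s) * jap y ^ (-(a - b))) := by rw [hsplit]; ring
    _ ≤ (2 ^ b * jap x ^ (-s)) * (jap (x - y) ^ (-s) * jap (x - y) ^ (-(a - b))) := by
        apply mul_le_mul h2 (mul_le_mul_of_nonneg_left h6 h7)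
          (mul_nonneg h7 (jr_nonneg _ _)) (by positivity)
    _ = 2 ^ b * jap x ^ (-s) * jap (x - y) ^ (-(a - b + s)) := by
        rw [← Real.rpow_add (jap_pos _)]; ring_nf
    _ ≤ 2 ^ b * jap x ^ (-s) * (jap y ^ (-a) + jap (x - y) ^ (-(a - b + s))) := by
        apply mul_le_mul_of_nonneg_left (le_add_of_nonneg_left (jr_nonneg _ _)) (by positivity)

/-- Pointwise estimate used for the plain convolution bound. -/
lemma ptB {s t : ℝ} (hs : 0 ≤ s) (ht : 0 ≤ t) (x y : E) :
    jap (x - y) ^ (-s) * jap y ^ (-t) ≤ jap y ^ (-(s+t)) + jap (x - y) ^ (-(s+t)) := by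
  rcases le_total ‖y‖ ‖x - y‖ with hc | hc
  · have h := jr_anti hs (jap_mono hc)
    calc jap (x - y) ^ (-s) * jap y ^ (-t) ≤ jap y ^ (-s) * jap y ^ (-t) :=
          mul_le_mul_of_nonneg_right h (jr_nonneg _ _)
    _ = jap y ^ (-(s+t)) := by rw [← Real.rpow_add (jap_pos y)]; ring_nf
    _ ≤ jap y ^ (-(s+t)) + jap (x - y) ^ (-(s+t)) := le_add_of_nonneg_right (jr_nonneg _ _)
  · have h := jr_anti ht (jap_mono hc)
    calc jap (x - y) ^ (-s) * jap y ^ (-t) ≤ jap (x - y) ^ (-s) * jap (x - y) ^ (-t) :=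
          mul_le_mul_of_nonneg_left h (jr_nonneg _ _)
    _ = jap (x - y) ^ (-(s+t)) := by rw [← Real.rpow_add (jap_pos _)]; ring_nf
    _ ≤ jap y ^ (-(s+t)) + jap (x - y) ^ (-(s+t)) := le_add_of_nonneg_left (jr_nonneg _ _)

/-- Pointwise splitting of the two weights. -/
lemma ptC {δ : ℝ} (hδ : 0 ≤ δ) (y z : E) :
    jap y ^ (-2:ℝ) * jap z ^ (-2:ℝ)
      ≤ jap y ^ (-(2+δ)) * jap z ^ (-(2-δ)) + jap y ^ (-(2-δ)) * jap z ^ (-(2+δ)) := by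
  rcases le_total (jap y) (jap z) with hc | hc
  · have h1 : jap z ^ (-δ) ≤ jap y ^ (-δ) := jr_anti hδ hc
    calc jap y ^ (-2:ℝ) * jap z ^ (-2:ℝ)
        = (jap y ^ (-2:ℝ) * jap z ^ (-δ)) * jap z ^ (-(2-δ)) := by
          rw [mul_assoc, ← Real.rpow_add (jap_pos z)]; ring_nf
    _ ≤ (jap y ^ (-2:ℝ) * jap y ^ (-δ)) * jap z ^ (-(2-δ)) := by
          apply mul_le_mul_of_nonneg_right
            (mul_le_mul_of_nonneg_left h1 (jr_nonneg _ _)) (jr_nonneg _ _)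
    _ = jap y ^ (-(2+δ)) * jap z ^ (-(2-δ)) := by
          rw [← Real.rpow_add (jap_pos y)]; ring_nf
    _ ≤ _ := le_add_of_nonneg_right (mul_nonneg (jr_nonneg _ _) (jr_nonneg _ _))
  · have h1 : jap y ^ (-δ) ≤ jap z ^ (-δ) := jr_anti hδ hc
    calc jap y ^ (-2:ℝ) * jap z ^ (-2:ℝ)
        = (jap y ^ (-δ) * jap y ^ (-(2-δ))) * jap z ^ (-2:ℝ) := by
          rw [← Real.rpow_add (jap_pos y)]; ring_nf
    _ ≤ (jap z ^ (-δ) * jap y ^ (-(2-δ))) * jap z ^ (-2:ℝ) := by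
          apply mul_le_mul_of_nonneg_right
            (mul_le_mul_of_nonneg_right h1 (jr_nonneg _ _)) (jr_nonneg _ _)
    _ = jap y ^ (-(2-δ)) * jap z ^ (-(2+δ)) := by
          rw [mul_comm (jap z ^ (-δ)), mul_assoc, ← Real.rpow_add (jap_pos z)]; ring_nf
    _ ≤ _ := le_add_of_nonneg_left (mul_nonneg (jr_nonneg _ _) (jr_nonneg _ _))

lemma continuous_jap : Continuous (jap : E → ℝ) := by
  apply Continuous.rpow_const
  · exact continuous_const.add (continuous_norm.pow 2)
  · exact fun x => Or.inr (by norm_num)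

lemma continuous_japr (r : ℝ) : Continuous fun x : E => jap x ^ (-r) :=
  continuous_jap.rpow_const fun x => Or.inl (jap_pos x).ne'

lemma contFe (r : ℝ) : Continuous fun x : E => ENNReal.ofReal (jap x ^ (-r)) :=
  ENNReal.continuous_ofReal.comp (continuous_japr r)

lemma measFe (r : ℝ) : Measurable fun x : E => ENNReal.ofReal (jap x ^ (-r)) :=
  (contFe r).measurable

/-- The basic finite integral. -/
noncomputable def japI (d : ℕ) (r : ℝ) : ℝ≥0∞ :=
  ∫⁻ x : EuclideanSpace ℝ (Fin d), ENNReal.ofReal (jap x ^ (-r))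

lemma japI_lt_top {r : ℝ} (hr : (d:ℝ) < r) (hr0 : 0 < r) : japI d r < ⊤ := by
  have key : ∀ x : E, jap x ^ (-r) ≤ 2 ^ (r/2) * (1+‖x‖)^(-r) := by
    intro x
    have h0 : (0:ℝ) ≤ 1 + ‖x‖^2 := by positivity
    have hj : jap x ^ (-r) = (1+‖x‖^2) ^ (-r/2) := by
      rw [jap, ← Real.rpow_mul h0]
      ring_nf
    rw [hj]
    exact rpow_neg_one_add_norm_sq_le x hr0
  calc japI d r ≤ ∫⁻ x : E, ENNReal.ofReal (2^(r/2) * (1+‖x‖)^(-r)) :=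
        lintegral_mono fun x => ENNReal.ofReal_le_ofReal (key x)
  _ = ENNReal.ofReal (2^(r/2)) * ∫⁻ x : E, ENNReal.ofReal ((1+‖x‖)^(-r)) := by
      simp_rw [ENNReal.ofReal_mul (by positivity : (0:ℝ) ≤ 2^(r/2))]
      exact lintegral_const_mul' _ _ ENNReal.ofReal_ne_top
  _ < ⊤ := ENNReal.mul_lt_top ENNReal.ofReal_lt_top
      (finite_integral_one_add_norm (by rw [finrank_euclideanSpace_fin]; exact hr))

lemma lint_shift (r : ℝ) (x : E) :
    ∫⁻ y : E, ENNReal.ofReal (jap (x - y) ^ (-r)) = japI d r :=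
  (Measure.measurePreserving_sub_left volume x).lintegral_comp (measFe r)

/-- The weighted convolution bound. -/
lemma conv1 {s b a : ℝ} (hs : 0 ≤ s) (hsb : s ≤ b) (hba : b ≤ a) (x : E) :
    ∫⁻ y : E, ENNReal.ofReal (jap (x - y) ^ (-s)) * ENNReal.ofReal (jap y ^ (-a))
      ≤ ENNReal.ofReal (2 ^ b * jap x ^ (-s)) * (japI d a + japI d (a - b + s)) := by
  have step : ∀ y : E,
      ENNReal.ofReal (jap (x - y) ^ (-s)) * ENNReal.ofReal (jap y ^ (-a))
        ≤ ENNReal.ofReal (2 ^ b * jap x ^ (-s)) *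
            (ENNReal.ofReal (jap y ^ (-a)) + ENNReal.ofReal (jap (x - y) ^ (-(a - b + s)))) := by
    intro y
    rw [← ENNReal.ofReal_mul (jr_nonneg _ _), ← ENNReal.ofReal_add (jr_nonneg _ _) (jr_nonneg _ _),
      ← ENNReal.ofReal_mul (mul_nonneg (by positivity) (jr_nonneg _ _))]
    exact ENNReal.ofReal_le_ofReal (ptA hs hsb hba x y)
  calc ∫⁻ y : E, ENNReal.ofReal (jap (x - y) ^ (-s)) * ENNReal.ofReal (jap y ^ (-a))
      ≤ ∫⁻ y : E, ENNReal.ofReal (2 ^ b * jap x ^ (-s)) *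
          (ENNReal.ofReal (jap y ^ (-a)) + ENNReal.ofReal (jap (x - y) ^ (-(a - b + s)))) :=
        lintegral_mono step
  _ = ENNReal.ofReal (2 ^ b * jap x ^ (-s)) *
      ∫⁻ y : E, (ENNReal.ofReal (jap y ^ (-a)) + ENNReal.ofReal (jap (x - y) ^ (-(a - b + s)))) :=
        lintegral_const_mul' _ _ ENNReal.ofReal_ne_top
  _ = ENNReal.ofReal (2 ^ b * jap x ^ (-s)) * (japI d a + japI d (a - b + s)) := by
      rw [lintegral_add_left (measFe a), lint_shift]
      rfl

/-- The plain convolution bound. -/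
lemma conv2 {s t : ℝ} (hs : 0 ≤ s) (ht : 0 ≤ t) (x : E) :
    ∫⁻ y : E, ENNReal.ofReal (jap (x - y) ^ (-s)) * ENNReal.ofReal (jap y ^ (-t))
      ≤ 2 * japI d (s + t) := by
  have step : ∀ y : E,
      ENNReal.ofReal (jap (x - y) ^ (-s)) * ENNReal.ofReal (jap y ^ (-t))
        ≤ ENNReal.ofReal (jap y ^ (-(s+t))) + ENNReal.ofReal (jap (x - y) ^ (-(s+t))) := by
    intro y
    rw [← ENNReal.ofReal_mul (jr_nonneg _ _), ← ENNReal.ofReal_add (jr_nonneg _ _) (jr_nonneg _ _)]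
    exact ENNReal.ofReal_le_ofReal (ptB hs ht x y)
  calc ∫⁻ y : E, ENNReal.ofReal (jap (x - y) ^ (-s)) * ENNReal.ofReal (jap y ^ (-t))
      ≤ ∫⁻ y : E, (ENNReal.ofReal (jap y ^ (-(s+t))) + ENNReal.ofReal (jap (x - y) ^ (-(s+t)))) :=
        lintegral_mono step
  _ = japI d (s+t) + japI d (s+t) := by rw [lintegral_add_left (measFe (s+t)), lint_shift]; rfl
  _ = 2 * japI d (s+t) := (two_mul _).symm

/-- The iterated double convolution bound. -/
lemma double {s b a t : ℝ} (hs : 0 ≤ s) (hsb : s ≤ b) (hba : b ≤ a) (ht : 0 ≤ t) (Q : E) :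
    ∫⁻ z : E, ∫⁻ y : E, ENNReal.ofReal (jap (Q - y - z) ^ (-s)) *
        ENNReal.ofReal (jap y ^ (-a)) * ENNReal.ofReal (jap z ^ (-t))
      ≤ ENNReal.ofReal (2 ^ b) * (japI d a + japI d (a - b + s)) * (2 * japI d (s + t)) := by
  set CI := japI d a + japI d (a - b + s) with hCI
  have inner : ∀ z : E,
      (∫⁻ y : E, ENNReal.ofReal (jap (Q - y - z) ^ (-s)) *
          ENNReal.ofReal (jap y ^ (-a)) * ENNReal.ofReal (jap z ^ (-t)))
        ≤ ENNReal.ofReal (2 ^ b) * CI *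
            (ENNReal.ofReal (jap (Q - z) ^ (-s)) * ENNReal.ofReal (jap z ^ (-t))) := by
    intro z
    calc ∫⁻ y : E, ENNReal.ofReal (jap (Q - y - z) ^ (-s)) *
            ENNReal.ofReal (jap y ^ (-a)) * ENNReal.ofReal (jap z ^ (-t))
        = (∫⁻ y : E, ENNReal.ofReal (jap ((Q - z) - y) ^ (-s)) *
            ENNReal.ofReal (jap y ^ (-a))) * ENNReal.ofReal (jap z ^ (-t)) := by
          rw [lintegral_mul_const' _ _ ENNReal.ofReal_ne_top]
          congr 1
          exact lintegral_congr fun y => by rw [sub_right_comm]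
    _ ≤ (ENNReal.ofReal (2 ^ b * jap (Q - z) ^ (-s)) * CI) * ENNReal.ofReal (jap z ^ (-t)) :=
          mul_le_mul_left (conv1 hs hsb hba (Q - z)) _
    _ = ENNReal.ofReal (2 ^ b) * CI *
          (ENNReal.ofReal (jap (Q - z) ^ (-s)) * ENNReal.ofReal (jap z ^ (-t))) := by
          rw [ENNReal.ofReal_mul (by positivity)]; ring
  calc ∫⁻ z : E, ∫⁻ y : E, ENNReal.ofReal (jap (Q - y - z) ^ (-s)) *
          ENNReal.ofReal (jap y ^ (-a)) * ENNReal.ofReal (jap z ^ (-t))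
      ≤ ∫⁻ z : E, ENNReal.ofReal (2 ^ b) * CI *
          (ENNReal.ofReal (jap (Q - z) ^ (-s)) * ENNReal.ofReal (jap z ^ (-t))) :=
        lintegral_mono inner
  _ = ENNReal.ofReal (2 ^ b) * CI *
      ∫⁻ z : E, ENNReal.ofReal (jap (Q - z) ^ (-s)) * ENNReal.ofReal (jap z ^ (-t)) := by
        apply lintegral_const_mul
        exact (((contFe s).comp (continuous_const.sub continuous_id)).measurable).mul (measFe t)
  _ ≤ ENNReal.ofReal (2 ^ b) * CI * (2 * japI d (s + t)) :=
        mul_le_mul_right (conv2 hs ht Q) _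

end Aux

/-- For `d ∈ {1,2}` and `0 ≤ α`, with `α ≤ 1` when `d = 1` and `α < 1` when `d = 2`,
there is a constant `C > 0` such that for every `P ∈ ℝ^d`,
`∫∫ ⟨P − y − z⟩^{-(2-2α)} ⟨y⟩^{-2} ⟨z⟩^{-2} dy dz ≤ C`. -/
theorem statement1 (d : ℕ) (hd : d = 1 ∨ d = 2) (α : ℝ) (hα : 0 ≤ α)
    (h1 : d = 1 → α ≤ 1) (h2 : d = 2 → α < 1) :
    ∃ C : ℝ, 0 < C ∧ ∀ P : EuclideanSpace ℝ (Fin d),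
      ∫⁻ yz : EuclideanSpace ℝ (Fin d) × EuclideanSpace ℝ (Fin d),
          ENNReal.ofReal (jap (P - yz.1 - yz.2) ^ (-(2 - 2 * α)) *
            jap yz.1 ^ (-2 : ℝ) * jap yz.2 ^ (-2 : ℝ))
        ≤ ENNReal.ofReal C := by
  suffices h : ∃ B : ℝ≥0∞, B ≠ ⊤ ∧ ∀ P : EuclideanSpace ℝ (Fin d),
      ∫⁻ yz : EuclideanSpace ℝ (Fin d) × EuclideanSpace ℝ (Fin d),
          ENNReal.ofReal (jap (P - yz.1 - yz.2) ^ (-(2 - 2 * α)) *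
            jap yz.1 ^ (-2 : ℝ) * jap yz.2 ^ (-2 : ℝ)) ≤ B by
    obtain ⟨B, hB, hle⟩ := h
    refine ⟨B.toReal + 1, by positivity, fun P => (hle P).trans ?_⟩
    exact (ENNReal.ofReal_toReal hB).symm.le.trans (ENNReal.ofReal_le_ofReal (by linarith))
  rcases hd with rfl | rfl
  · -- d = 1
    have hα1 : α ≤ 1 := h1 rfl
    have hs : 0 ≤ 2 - 2*α := by linarith
    refine ⟨japI 1 2 * japI 1 2, ?_, fun P => ?_⟩
    · have hI := japI_lt_top (d := 1) (r := 2) (by norm_num) (by norm_num)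
      exact (ENNReal.mul_lt_top hI hI).ne
    · calc ∫⁻ yz : EuclideanSpace ℝ (Fin 1) × EuclideanSpace ℝ (Fin 1),
            ENNReal.ofReal (jap (P - yz.1 - yz.2) ^ (-(2 - 2 * α)) *
              jap yz.1 ^ (-2 : ℝ) * jap yz.2 ^ (-2 : ℝ))
          ≤ ∫⁻ yz : EuclideanSpace ℝ (Fin 1) × EuclideanSpace ℝ (Fin 1),
            ENNReal.ofReal (jap yz.1 ^ (-2 : ℝ)) * ENNReal.ofReal (jap yz.2 ^ (-2 : ℝ)) := by
            apply lintegral_mono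
            intro yz
            dsimp only
            rw [← ENNReal.ofReal_mul (jr_nonneg _ _)]
            apply ENNReal.ofReal_le_ofReal
            apply mul_le_mul_of_nonneg_right _ (jr_nonneg _ _)
            exact mul_le_of_le_one_left (jr_nonneg _ _) (jr_le_one hs _)
      _ = japI 1 2 * japI 1 2 := by
            rw [Measure.volume_eq_prod]
            exact lintegral_prod_mul (measFe 2).aemeasurable (measFe 2).aemeasurable
  · -- d = 2
    have hα2 : α < 1 := h2 rfl
    set δ : ℝ := 1 - α with hδdef
    have hδ0 : 0 < δ := by simp only [hδdef]; linarith
    set s : ℝ := 2 - 2*α with hsdef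
    have hs0 : 0 < s := by simp only [hsdef]; linarith
    have hs2 : s ≤ 2 := by simp only [hsdef]; linarith
    set a : ℝ := 2 + δ with hadef
    set b : ℝ := s + δ/2 with hbdef
    set t : ℝ := 2 - δ with htdef
    have hsb : s ≤ b := by simp only [hbdef]; linarith
    have hba : b ≤ a := by simp only [hbdef, hadef]; linarith
    have ht0 : 0 ≤ t := by simp only [htdef, hδdef]; linarith
    have habs : a - b + s = 2 + δ/2 := by simp only [hadef, hbdef]; ring
    have hst : s + t = 2 + δ := by simp only [hsdef, htdef, hδdef]; ring
    set B1 : ℝ≥0∞ := ENNReal.ofReal (2 ^ b) * (japI 2 a + japI 2 (a - b + s)) * (2 * japI 2 (s + t))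
      with hB1def
    have hB1 : B1 ≠ ⊤ := by
      have hIa : japI 2 a < ⊤ := japI_lt_top (by push_cast; simp only [hadef]; linarith)
        (by simp only [hadef]; linarith)
      have hIb : japI 2 (a - b + s) < ⊤ := japI_lt_top (by push_cast; rw [habs]; linarith)
        (by rw [habs]; linarith)
      have hIc : japI 2 (s + t) < ⊤ := japI_lt_top (by push_cast; rw [hst]; linarith)
        (by rw [hst]; linarith)
      rw [hB1def]
      exact (ENNReal.mul_lt_top (ENNReal.mul_lt_top ENNReal.ofReal_lt_top
        (ENNReal.add_lt_top.2 ⟨hIa, hIb⟩)) (ENNReal.mul_lt_top (by norm_num) hIc)).ne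
    refine ⟨B1 + B1, by simp [hB1, ENNReal.add_ne_top], fun P => ?_⟩
    have hmeasT : ∀ u v : ℝ, Measurable fun yz : EuclideanSpace ℝ (Fin 2) × EuclideanSpace ℝ (Fin 2) =>
        ENNReal.ofReal (jap (P - yz.1 - yz.2) ^ (-s)) *
          ENNReal.ofReal (jap yz.1 ^ (-u)) * ENNReal.ofReal (jap yz.2 ^ (-v)) := by
      intro u v
      have c1 : Continuous fun yz : EuclideanSpace ℝ (Fin 2) × EuclideanSpace ℝ (Fin 2) =>
          P - yz.1 - yz.2 := ((continuous_const.sub continuous_fst).sub continuous_snd)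
      exact ((((contFe s).comp c1).measurable.mul ((contFe u).comp continuous_fst).measurable).mul
        ((contFe v).comp continuous_snd).measurable)
    calc ∫⁻ yz : EuclideanSpace ℝ (Fin 2) × EuclideanSpace ℝ (Fin 2),
          ENNReal.ofReal (jap (P - yz.1 - yz.2) ^ (-(2 - 2 * α)) *
            jap yz.1 ^ (-2 : ℝ) * jap yz.2 ^ (-2 : ℝ))
        ≤ ∫⁻ yz : EuclideanSpace ℝ (Fin 2) × EuclideanSpace ℝ (Fin 2),
          (ENNReal.ofReal (jap (P - yz.1 - yz.2) ^ (-s)) *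
            ENNReal.ofReal (jap yz.1 ^ (-a)) * ENNReal.ofReal (jap yz.2 ^ (-t)) +
           ENNReal.ofReal (jap (P - yz.1 - yz.2) ^ (-s)) *
            ENNReal.ofReal (jap yz.1 ^ (-t)) * ENNReal.ofReal (jap yz.2 ^ (-a))) := by
          apply lintegral_mono
          intro yz
          dsimp only
          have hneg : -(2 - 2 * α) = -s := by rw [hsdef]
          rw [hneg, ENNReal.ofReal_mul (mul_nonneg (jr_nonneg _ _) (jr_nonneg _ _)), ENNReal.ofReal_mul (jr_nonneg _ _)]
          have hC := ptC hδ0.le yz.1 yz.2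
          calc ENNReal.ofReal (jap (P - yz.1 - yz.2) ^ (-s)) *
                ENNReal.ofReal (jap yz.1 ^ (-2:ℝ)) * ENNReal.ofReal (jap yz.2 ^ (-2:ℝ))
              = ENNReal.ofReal (jap (P - yz.1 - yz.2) ^ (-s)) *
                ENNReal.ofReal (jap yz.1 ^ (-2:ℝ) * jap yz.2 ^ (-2:ℝ)) := by
                rw [mul_assoc, ENNReal.ofReal_mul (jr_nonneg _ _)]
          _ ≤ ENNReal.ofReal (jap (P - yz.1 - yz.2) ^ (-s)) *
                (ENNReal.ofReal (jap yz.1 ^ (-a) * jap yz.2 ^ (-t)) +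
                 ENNReal.ofReal (jap yz.1 ^ (-t) * jap yz.2 ^ (-a))) := by
                apply mul_le_mul_right
                rw [← ENNReal.ofReal_add (mul_nonneg (jr_nonneg _ _) (jr_nonneg _ _)) (mul_nonneg (jr_nonneg _ _) (jr_nonneg _ _))]
                exact ENNReal.ofReal_le_ofReal (by rw [hadef, htdef]; exact hC)
          _ = _ := by
                rw [ENNReal.ofReal_mul (jr_nonneg _ _), ENNReal.ofReal_mul (jr_nonneg _ _)]
                ring
    _ = (∫⁻ yz : EuclideanSpace ℝ (Fin 2) × EuclideanSpace ℝ (Fin 2),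
          ENNReal.ofReal (jap (P - yz.1 - yz.2) ^ (-s)) *
            ENNReal.ofReal (jap yz.1 ^ (-a)) * ENNReal.ofReal (jap yz.2 ^ (-t))) +
        (∫⁻ yz : EuclideanSpace ℝ (Fin 2) × EuclideanSpace ℝ (Fin 2),
          ENNReal.ofReal (jap (P - yz.1 - yz.2) ^ (-s)) *
            ENNReal.ofReal (jap yz.1 ^ (-t)) * ENNReal.ofReal (jap yz.2 ^ (-a))) :=
          lintegral_add_left (hmeasT a t) _
    _ ≤ B1 + B1 := by
          apply add_le_add
          · rw [Measure.volume_eq_prod, lintegral_prod_symm _ (hmeasT a t).aemeasurable]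
            exact double hs0.le hsb hba ht0 P
          · rw [Measure.volume_eq_prod, lintegral_prod _ (hmeasT t a).aemeasurable]
            have : ∀ y z : EuclideanSpace ℝ (Fin 2),
                ENNReal.ofReal (jap (P - y - z) ^ (-s)) *
                  ENNReal.ofReal (jap y ^ (-t)) * ENNReal.ofReal (jap z ^ (-a))
                = ENNReal.ofReal (jap (P - z - y) ^ (-s)) *
                  ENNReal.ofReal (jap z ^ (-a)) * ENNReal.ofReal (jap y ^ (-t)) := by
              intro y z; rw [sub_right_comm]; ring
            calc ∫⁻ y : EuclideanSpace ℝ (Fin 2), ∫⁻ z : EuclideanSpace ℝ (Fin 2),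
                  ENNReal.ofReal (jap (P - y - z) ^ (-s)) *
                    ENNReal.ofReal (jap y ^ (-t)) * ENNReal.ofReal (jap z ^ (-a))
                = ∫⁻ y : EuclideanSpace ℝ (Fin 2), ∫⁻ z : EuclideanSpace ℝ (Fin 2),
                  ENNReal.ofReal (jap (P - z - y) ^ (-s)) *
                    ENNReal.ofReal (jap z ^ (-a)) * ENNReal.ofReal (jap y ^ (-t)) :=
                  lintegral_congr fun y => lintegral_congr fun z => this y z
            _ ≤ B1 := double hs0.le hsb hba ht0 P
end

section
/- For every dimension d ≥ 1 and every real α > d/2 there exists a constant C > 0 such that for every u ∈ ℝ^d, ∫_{(ℝ^d)^4} ⟨u⟩^{2α} · ⟨u + q₁ + q₂ − q₁′ − q₂′⟩^{-2α} ⟨q₁⟩^{-2α} ⟨q₂⟩^{-2α} ⟨q₁′⟩^{-2α} ⟨q₂′⟩^{-2α} dq₁ dq₂ dq₁′ dq₂′ ≤ C. -/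
open MeasureTheory

section JapFacts

variable {d : ℕ}

lemma jap_eq_sqrt (x : EuclideanSpace ℝ (Fin d)) : jap x = Real.sqrt (1 + ‖x‖ ^ 2) := by
  rw [jap, Real.sqrt_eq_rpow]

lemma one_le_jap_s3 (x : EuclideanSpace ℝ (Fin d)) : 1 ≤ jap x := by
  rw [jap_eq_sqrt]
  calc (1:ℝ) = Real.sqrt 1 := Real.sqrt_one.symm
  _ ≤ Real.sqrt (1 + ‖x‖ ^ 2) := Real.sqrt_le_sqrt (le_add_of_nonneg_right (by positivity))

lemma jap_pos_s3 (x : EuclideanSpace ℝ (Fin d)) : 0 < jap x :=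
  lt_of_lt_of_le one_pos (one_le_jap_s3 x)

lemma norm_le_jap (x : EuclideanSpace ℝ (Fin d)) : ‖x‖ ≤ jap x := by
  rw [jap_eq_sqrt]
  calc ‖x‖ = Real.sqrt (‖x‖ ^ 2) := (Real.sqrt_sq (norm_nonneg x)).symm
  _ ≤ Real.sqrt (1 + ‖x‖ ^ 2) := Real.sqrt_le_sqrt (by linarith)

lemma jap_le_one_add (x : EuclideanSpace ℝ (Fin d)) : jap x ≤ 1 + ‖x‖ := by
  rw [jap_eq_sqrt]; exact sqrt_one_add_norm_sq_le x

lemma jap_measurable : Measurable (jap (d := d)) := by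
  unfold jap; fun_prop

end JapFacts

section CoreIneq

private lemma rpow_cancel {b r : ℝ} (hb : 0 < b) : b ^ r * b ^ (-r) = 1 := by
  rw [← Real.rpow_add hb]; simp

lemma core_ineq {r a b0 b1 b2 b3 b4 : ℝ} (hr : 0 ≤ r) (ha : 0 ≤ a)
    (h0 : 1 ≤ b0) (h1 : 1 ≤ b1) (h2 : 1 ≤ b2) (h3 : 1 ≤ b3) (h4 : 1 ≤ b4)
    (hsum : a ≤ 2 * (b0 + b1 + b2 + b3 + b4)) :
    a ^ r * (b0 ^ (-r) * b1 ^ (-r) * b2 ^ (-r) * b3 ^ (-r) * b4 ^ (-r)) ≤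
      10 ^ r *
        (b1 ^ (-r) * b2 ^ (-r) * b3 ^ (-r) * b4 ^ (-r) +
         b0 ^ (-r) * b2 ^ (-r) * b3 ^ (-r) * b4 ^ (-r) +
         b0 ^ (-r) * b1 ^ (-r) * b3 ^ (-r) * b4 ^ (-r) +
         b0 ^ (-r) * b1 ^ (-r) * b2 ^ (-r) * b4 ^ (-r) +
         b0 ^ (-r) * b1 ^ (-r) * b2 ^ (-r) * b3 ^ (-r)) := by
  have hb0 : (0:ℝ) < b0 := by linarith
  have hb1 : (0:ℝ) < b1 := by linarith
  have hb2 : (0:ℝ) < b2 := by linarith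
  have hb3 : (0:ℝ) < b3 := by linarith
  have hb4 : (0:ℝ) < b4 := by linarith
  have n0 : 0 ≤ b0 ^ (-r) := Real.rpow_nonneg hb0.le _
  have n1 : 0 ≤ b1 ^ (-r) := Real.rpow_nonneg hb1.le _
  have n2 : 0 ≤ b2 ^ (-r) := Real.rpow_nonneg hb2.le _
  have n3 : 0 ≤ b3 ^ (-r) := Real.rpow_nonneg hb3.le _
  have n4 : 0 ≤ b4 ^ (-r) := Real.rpow_nonneg hb4.le _
  have t0 : 0 ≤ b1 ^ (-r) * b2 ^ (-r) * b3 ^ (-r) * b4 ^ (-r) := by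
    exact mul_nonneg (mul_nonneg (mul_nonneg n1 n2) n3) n4
  have t1 : 0 ≤ b0 ^ (-r) * b2 ^ (-r) * b3 ^ (-r) * b4 ^ (-r) := by
    exact mul_nonneg (mul_nonneg (mul_nonneg n0 n2) n3) n4
  have t2 : 0 ≤ b0 ^ (-r) * b1 ^ (-r) * b3 ^ (-r) * b4 ^ (-r) := by
    exact mul_nonneg (mul_nonneg (mul_nonneg n0 n1) n3) n4
  have t3 : 0 ≤ b0 ^ (-r) * b1 ^ (-r) * b2 ^ (-r) * b4 ^ (-r) := by
    exact mul_nonneg (mul_nonneg (mul_nonneg n0 n1) n2) n4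
  have t4 : 0 ≤ b0 ^ (-r) * b1 ^ (-r) * b2 ^ (-r) * b3 ^ (-r) := by
    exact mul_nonneg (mul_nonneg (mul_nonneg n0 n1) n2) n3
  have hPn : 0 ≤ b0 ^ (-r) * b1 ^ (-r) * b2 ^ (-r) * b3 ^ (-r) * b4 ^ (-r) :=
    mul_nonneg t4 n4
  set m := max b0 (max b1 (max b2 (max b3 b4))) with hmdef
  have hm0 : b0 ≤ m := le_max_left _ _
  have hm1 : b1 ≤ m := le_trans (le_max_left _ _) (le_max_right _ _)
  have hm2 : b2 ≤ m :=
    le_trans (le_trans (le_max_left _ _) (le_max_right _ _)) (le_max_right _ _)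
  have hm3 : b3 ≤ m :=
    le_trans (le_trans (le_trans (le_max_left _ _) (le_max_right _ _)) (le_max_right _ _))
      (le_max_right _ _)
  have hm4 : b4 ≤ m :=
    le_trans (le_trans (le_trans (le_max_right _ _) (le_max_right _ _)) (le_max_right _ _))
      (le_max_right _ _)
  have hmpos : 0 < m := lt_of_lt_of_le hb0 hm0
  have ham : a ≤ 10 * m := by linarith
  have haf : a ^ r ≤ 10 ^ r * m ^ r := by
    calc a ^ r ≤ (10 * m) ^ r := Real.rpow_le_rpow ha ham hr
    _ = 10 ^ r * m ^ r := Real.mul_rpow (by norm_num) hmpos.le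
  have step1 : a ^ r * (b0 ^ (-r) * b1 ^ (-r) * b2 ^ (-r) * b3 ^ (-r) * b4 ^ (-r)) ≤
      10 ^ r * (m ^ r * (b0 ^ (-r) * b1 ^ (-r) * b2 ^ (-r) * b3 ^ (-r) * b4 ^ (-r))) := by
    calc a ^ r * (b0 ^ (-r) * b1 ^ (-r) * b2 ^ (-r) * b3 ^ (-r) * b4 ^ (-r)) ≤
        (10 ^ r * m ^ r) * (b0 ^ (-r) * b1 ^ (-r) * b2 ^ (-r) * b3 ^ (-r) * b4 ^ (-r)) :=
      mul_le_mul_of_nonneg_right haf hPn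
    _ = 10 ^ r * (m ^ r * (b0 ^ (-r) * b1 ^ (-r) * b2 ^ (-r) * b3 ^ (-r) * b4 ^ (-r))) := by
      ring
  refine step1.trans (mul_le_mul_of_nonneg_left ?_ (by positivity))
  have hcase : m = b0 ∨ m = b1 ∨ m = b2 ∨ m = b3 ∨ m = b4 := by
    rcases max_choice b0 (max b1 (max b2 (max b3 b4))) with h | h
    · exact Or.inl h
    rcases max_choice b1 (max b2 (max b3 b4)) with h' | h'
    · exact Or.inr (Or.inl (h.trans h'))
    rcases max_choice b2 (max b3 b4) with h'' | h''
    · exact Or.inr (Or.inr (Or.inl ((h.trans h').trans h'')))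
    rcases max_choice b3 b4 with h''' | h'''
    · exact Or.inr (Or.inr (Or.inr (Or.inl (((h.trans h').trans h'').trans h'''))))
    · exact Or.inr (Or.inr (Or.inr (Or.inr (((h.trans h').trans h'').trans h'''))))
  rcases hcase with h|h|h|h|h <;> rw [h]
  · have e : b0 ^ r * (b0 ^ (-r) * b1 ^ (-r) * b2 ^ (-r) * b3 ^ (-r) * b4 ^ (-r)) =
        b1 ^ (-r) * b2 ^ (-r) * b3 ^ (-r) * b4 ^ (-r) := by
      calc b0 ^ r * (b0 ^ (-r) * b1 ^ (-r) * b2 ^ (-r) * b3 ^ (-r) * b4 ^ (-r)) =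
          (b0 ^ r * b0 ^ (-r)) * (b1 ^ (-r) * b2 ^ (-r) * b3 ^ (-r) * b4 ^ (-r)) := by ring
      _ = b1 ^ (-r) * b2 ^ (-r) * b3 ^ (-r) * b4 ^ (-r) := by rw [rpow_cancel hb0, one_mul]
    rw [e]; linarith
  · have e : b1 ^ r * (b0 ^ (-r) * b1 ^ (-r) * b2 ^ (-r) * b3 ^ (-r) * b4 ^ (-r)) =
        b0 ^ (-r) * b2 ^ (-r) * b3 ^ (-r) * b4 ^ (-r) := by
      calc b1 ^ r * (b0 ^ (-r) * b1 ^ (-r) * b2 ^ (-r) * b3 ^ (-r) * b4 ^ (-r)) =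
          (b1 ^ r * b1 ^ (-r)) * (b0 ^ (-r) * b2 ^ (-r) * b3 ^ (-r) * b4 ^ (-r)) := by ring
      _ = b0 ^ (-r) * b2 ^ (-r) * b3 ^ (-r) * b4 ^ (-r) := by rw [rpow_cancel hb1, one_mul]
    rw [e]; linarith
  · have e : b2 ^ r * (b0 ^ (-r) * b1 ^ (-r) * b2 ^ (-r) * b3 ^ (-r) * b4 ^ (-r)) =
        b0 ^ (-r) * b1 ^ (-r) * b3 ^ (-r) * b4 ^ (-r) := by
      calc b2 ^ r * (b0 ^ (-r) * b1 ^ (-r) * b2 ^ (-r) * b3 ^ (-r) * b4 ^ (-r)) =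
          (b2 ^ r * b2 ^ (-r)) * (b0 ^ (-r) * b1 ^ (-r) * b3 ^ (-r) * b4 ^ (-r)) := by ring
      _ = b0 ^ (-r) * b1 ^ (-r) * b3 ^ (-r) * b4 ^ (-r) := by rw [rpow_cancel hb2, one_mul]
    rw [e]; linarith
  · have e : b3 ^ r * (b0 ^ (-r) * b1 ^ (-r) * b2 ^ (-r) * b3 ^ (-r) * b4 ^ (-r)) =
        b0 ^ (-r) * b1 ^ (-r) * b2 ^ (-r) * b4 ^ (-r) := by
      calc b3 ^ r * (b0 ^ (-r) * b1 ^ (-r) * b2 ^ (-r) * b3 ^ (-r) * b4 ^ (-r)) =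
          (b3 ^ r * b3 ^ (-r)) * (b0 ^ (-r) * b1 ^ (-r) * b2 ^ (-r) * b4 ^ (-r)) := by ring
      _ = b0 ^ (-r) * b1 ^ (-r) * b2 ^ (-r) * b4 ^ (-r) := by rw [rpow_cancel hb3, one_mul]
    rw [e]; linarith
  · have e : b4 ^ r * (b0 ^ (-r) * b1 ^ (-r) * b2 ^ (-r) * b3 ^ (-r) * b4 ^ (-r)) =
        b0 ^ (-r) * b1 ^ (-r) * b2 ^ (-r) * b3 ^ (-r) := by
      calc b4 ^ r * (b0 ^ (-r) * b1 ^ (-r) * b2 ^ (-r) * b3 ^ (-r) * b4 ^ (-r)) =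
          (b4 ^ r * b4 ^ (-r)) * (b0 ^ (-r) * b1 ^ (-r) * b2 ^ (-r) * b3 ^ (-r)) := by ring
      _ = b0 ^ (-r) * b1 ^ (-r) * b2 ^ (-r) * b3 ^ (-r) := by rw [rpow_cancel hb4, one_mul]
    rw [e]; linarith


lemma ofReal_prod4 {a b c d : ℝ} (ha : 0 ≤ a) (hb : 0 ≤ b) (hc : 0 ≤ c) (hd : 0 ≤ d) :
    ENNReal.ofReal (a * b * c * d) =
      ENNReal.ofReal a * ENNReal.ofReal b * ENNReal.ofReal c * ENNReal.ofReal d := by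
  rw [ENNReal.ofReal_mul (by positivity), ENNReal.ofReal_mul (by positivity),
    ENNReal.ofReal_mul ha]

end CoreIneq

/-- For every `d ≥ 1` and `α > d/2` there is `C > 0` such that for every `u ∈ ℝ^d`,
`∫_{(ℝ^d)⁴} ⟨u⟩^{2α} ⟨u + q₁ + q₂ − q₁′ − q₂′⟩^{-2α} ⟨q₁⟩^{-2α} ⟨q₂⟩^{-2α} ⟨q₁′⟩^{-2α} ⟨q₂′⟩^{-2α}
  dq₁ dq₂ dq₁′ dq₂′ ≤ C`. -/
theorem statement3 (d : ℕ) (hd : 1 ≤ d) (α : ℝ) (hα : (d : ℝ) / 2 < α) :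
    ∃ C : ℝ, 0 < C ∧ ∀ u : EuclideanSpace ℝ (Fin d),
      ∫⁻ q : (EuclideanSpace ℝ (Fin d) × EuclideanSpace ℝ (Fin d)) ×
              EuclideanSpace ℝ (Fin d) × EuclideanSpace ℝ (Fin d),
          ENNReal.ofReal (jap u ^ (2 * α) *
            (jap (u + q.1.1 + q.1.2 - q.2.1 - q.2.2) ^ (-(2 * α)) *
              jap q.1.1 ^ (-(2 * α)) * jap q.1.2 ^ (-(2 * α)) *
              jap q.2.1 ^ (-(2 * α)) * jap q.2.2 ^ (-(2 * α))))
        ≤ ENNReal.ofReal C := by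
  have hα0 : 0 < α := lt_of_le_of_lt (by positivity) hα
  have hr : (0:ℝ) ≤ 2 * α := by linarith
  set E := EuclideanSpace ℝ (Fin d) with hE
  -- the basic decaying function
  set f : E → ℝ := fun x => jap x ^ (-(2 * α)) with hfdef
  have hf_eq : ∀ x : E, f x = ((1:ℝ) + ‖x‖ ^ 2) ^ (-(2 * α) / 2) := by
    intro x
    rw [hfdef]; simp only []
    rw [jap, ← Real.rpow_mul (by positivity)]
    congr 1; ring
  have hfn : ∀ x : E, 0 ≤ f x := fun x => Real.rpow_nonneg (jap_pos_s3 x).le _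
  have hfm : Measurable f := by
    have : f = fun x : E => ((1:ℝ) + ‖x‖ ^ 2) ^ (-(2 * α) / 2) := funext hf_eq
    rw [this]; fun_prop
  have hint : Integrable f := by
    have : Integrable (fun x : E => ((1:ℝ) + ‖x‖ ^ 2) ^ (-(2 * α) / 2)) := by
      apply integrable_rpow_neg_one_add_norm_sq
      rw [finrank_euclideanSpace_fin]
      linarith
    exact this.congr (Filter.Eventually.of_forall fun x => (hf_eq x).symm)
  set G : E → ENNReal := fun x => ENNReal.ofReal (f x) with hGdef
  have hGm : Measurable G := hfm.ennreal_ofReal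
  have hGnt : ∀ x, G x ≠ ⊤ := fun x => ENNReal.ofReal_ne_top
  set I := ∫⁻ x : E, G x with hIdef
  have hItop : I ≠ ⊤ := by
    have := (hasFiniteIntegral_iff_ofReal
      (Filter.Eventually.of_forall hfn)).mp hint.hasFiniteIntegral
    exact this.ne
  -- constant
  set c : ENNReal := ENNReal.ofReal (10 ^ (2 * α)) with hc
  have hcnt : c ≠ ⊤ := ENNReal.ofReal_ne_top
  have hBnt : c * (5 * ((I * I) * (I * I))) ≠ ⊤ := by
    refine ENNReal.mul_ne_top hcnt (ENNReal.mul_ne_top (by simp) ?_)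
    exact ENNReal.mul_ne_top (ENNReal.mul_ne_top hItop hItop)
      (ENNReal.mul_ne_top hItop hItop)
  refine ⟨(c * (5 * ((I * I) * (I * I)))).toReal + 1, by positivity, fun u => ?_⟩
  -- basic translation identities
  have htransl : ∀ cst : E, ∫⁻ x : E, G (cst + x) = I := fun cst =>
    lintegral_add_left_eq_self G cst
  have htranss : ∀ cst : E, ∫⁻ x : E, G (cst - x) = I := fun cst =>
    (Measure.measurePreserving_sub_left (volume : Measure E) cst).lintegral_comp hGm
  have hI2 : ∫⁻ p : E × E, G p.1 * G p.2 = I * I := by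
    rw [Measure.volume_eq_prod]
    exact lintegral_prod_mul hGm.aemeasurable hGm.aemeasurable
  have am2 : AEMeasurable (fun p : E × E => G p.1 * G p.2)
      (volume : Measure (E × E)) := by fun_prop
  -- inner double-integral computations
  have inner1 : ∀ cst : E, ∫⁻ p : E × E, G (cst + p.1 + p.2) * G p.2 = I * I := by
    intro cst
    rw [Measure.volume_eq_prod, lintegral_prod_symm _ (by fun_prop)]
    have h1 : ∀ y : E, (∫⁻ x : E, G (cst + x + y) * G y) = I * G y := by
      intro y
      rw [lintegral_mul_const' (G y) _ (hGnt y)]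
      congr 1
      calc (∫⁻ x : E, G (cst + x + y)) = ∫⁻ x : E, G ((cst + y) + x) := by
            apply lintegral_congr; intro x; congr 1; abel
      _ = I := htransl (cst + y)
    calc (∫⁻ y : E, ∫⁻ x : E, G (cst + x + y) * G y) = ∫⁻ y : E, I * G y := by
          apply lintegral_congr; intro y; exact h1 y
    _ = I * I := by rw [lintegral_const_mul' I G hItop]
  have inner2 : ∀ cst : E, ∫⁻ p : E × E, G (cst + p.1 + p.2) * G p.1 = I * I := by
    intro cst
    rw [Measure.volume_eq_prod, lintegral_prod _ (by fun_prop)]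
    have h1 : ∀ x : E, (∫⁻ y : E, G (cst + x + y) * G x) = I * G x := by
      intro x
      rw [lintegral_mul_const' (G x) _ (hGnt x)]
      congr 1
      exact htransl (cst + x)
    calc (∫⁻ x : E, ∫⁻ y : E, G (cst + x + y) * G x) = ∫⁻ x : E, I * G x := by
          apply lintegral_congr; intro x; exact h1 x
    _ = I * I := by rw [lintegral_const_mul' I G hItop]
  have inner3 : ∀ cst : E, ∫⁻ p : E × E, G (cst - p.1 - p.2) * G p.2 = I * I := by
    intro cst
    rw [Measure.volume_eq_prod, lintegral_prod_symm _ (by fun_prop)]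
    have h1 : ∀ y : E, (∫⁻ x : E, G (cst - x - y) * G y) = I * G y := by
      intro y
      rw [lintegral_mul_const' (G y) _ (hGnt y)]
      congr 1
      calc (∫⁻ x : E, G (cst - x - y)) = ∫⁻ x : E, G ((cst - y) - x) := by
            apply lintegral_congr; intro x; congr 1; abel
      _ = I := htranss (cst - y)
    calc (∫⁻ y : E, ∫⁻ x : E, G (cst - x - y) * G y) = ∫⁻ y : E, I * G y := by
          apply lintegral_congr; intro y; exact h1 y
    _ = I * I := by rw [lintegral_const_mul' I G hItop]
  have inner4 : ∀ cst : E, ∫⁻ p : E × E, G (cst - p.1 - p.2) * G p.1 = I * I := by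
    intro cst
    rw [Measure.volume_eq_prod, lintegral_prod _ (by fun_prop)]
    have h1 : ∀ x : E, (∫⁻ y : E, G (cst - x - y) * G x) = I * G x := by
      intro x
      rw [lintegral_mul_const' (G x) _ (hGnt x)]
      congr 1
      exact htranss (cst - x)
    calc (∫⁻ x : E, ∫⁻ y : E, G (cst - x - y) * G x) = ∫⁻ x : E, I * G x := by
          apply lintegral_congr; intro x; exact h1 x
    _ = I * I := by rw [lintegral_const_mul' I G hItop]
  have hII : I * I ≠ ⊤ := ENNReal.mul_ne_top hItop hItop
  -- the five four-fold integrals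
  have hP0 : ∫⁻ z : (E × E) × (E × E),
      (G z.1.1 * G z.1.2) * (G z.2.1 * G z.2.2) = (I * I) * (I * I) := by
    rw [Measure.volume_eq_prod]
    exact (lintegral_prod_mul am2 am2).trans (by rw [hI2])
  have hP1 : ∫⁻ z : (E × E) × (E × E),
      (G (u + z.1.1 + z.1.2 - z.2.1 - z.2.2) * G z.1.2) * (G z.2.1 * G z.2.2)
        = (I * I) * (I * I) := by
    rw [Measure.volume_eq_prod, lintegral_prod_symm _ (by fun_prop)]
    have h1 : ∀ p2 : E × E,
        (∫⁻ p1 : E × E, (G (u + p1.1 + p1.2 - p2.1 - p2.2) * G p1.2) * (G p2.1 * G p2.2))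
          = (I * I) * (G p2.1 * G p2.2) := by
      intro p2
      rw [lintegral_mul_const' (G p2.1 * G p2.2) _
        (ENNReal.mul_ne_top (hGnt _) (hGnt _))]
      congr 1
      calc (∫⁻ p1 : E × E, G (u + p1.1 + p1.2 - p2.1 - p2.2) * G p1.2)
          = ∫⁻ p1 : E × E, G ((u - p2.1 - p2.2) + p1.1 + p1.2) * G p1.2 := by
            apply lintegral_congr; intro p1; congr 2; abel
      _ = I * I := inner1 (u - p2.1 - p2.2)
    calc (∫⁻ p2 : E × E, ∫⁻ p1 : E × E,
          (G (u + p1.1 + p1.2 - p2.1 - p2.2) * G p1.2) * (G p2.1 * G p2.2))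
        = ∫⁻ p2 : E × E, (I * I) * (G p2.1 * G p2.2) := by
          apply lintegral_congr; intro p2; exact h1 p2
    _ = (I * I) * (I * I) := by
        rw [lintegral_const_mul' (I * I) _ hII, hI2]
  have hP2 : ∫⁻ z : (E × E) × (E × E),
      (G (u + z.1.1 + z.1.2 - z.2.1 - z.2.2) * G z.1.1) * (G z.2.1 * G z.2.2)
        = (I * I) * (I * I) := by
    rw [Measure.volume_eq_prod, lintegral_prod_symm _ (by fun_prop)]
    have h1 : ∀ p2 : E × E,
        (∫⁻ p1 : E × E, (G (u + p1.1 + p1.2 - p2.1 - p2.2) * G p1.1) * (G p2.1 * G p2.2))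
          = (I * I) * (G p2.1 * G p2.2) := by
      intro p2
      rw [lintegral_mul_const' (G p2.1 * G p2.2) _
        (ENNReal.mul_ne_top (hGnt _) (hGnt _))]
      congr 1
      calc (∫⁻ p1 : E × E, G (u + p1.1 + p1.2 - p2.1 - p2.2) * G p1.1)
          = ∫⁻ p1 : E × E, G ((u - p2.1 - p2.2) + p1.1 + p1.2) * G p1.1 := by
            apply lintegral_congr; intro p1; congr 2; abel
      _ = I * I := inner2 (u - p2.1 - p2.2)
    calc (∫⁻ p2 : E × E, ∫⁻ p1 : E × E,
          (G (u + p1.1 + p1.2 - p2.1 - p2.2) * G p1.1) * (G p2.1 * G p2.2))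
        = ∫⁻ p2 : E × E, (I * I) * (G p2.1 * G p2.2) := by
          apply lintegral_congr; intro p2; exact h1 p2
    _ = (I * I) * (I * I) := by
        rw [lintegral_const_mul' (I * I) _ hII, hI2]
  have hP3 : ∫⁻ z : (E × E) × (E × E),
      (G z.1.1 * G z.1.2) * (G (u + z.1.1 + z.1.2 - z.2.1 - z.2.2) * G z.2.2)
        = (I * I) * (I * I) := by
    rw [Measure.volume_eq_prod, lintegral_prod _ (by fun_prop)]
    have h1 : ∀ p1 : E × E,
        (∫⁻ p2 : E × E, (G p1.1 * G p1.2) * (G (u + p1.1 + p1.2 - p2.1 - p2.2) * G p2.2))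
          = (G p1.1 * G p1.2) * (I * I) := by
      intro p1
      rw [lintegral_const_mul' (G p1.1 * G p1.2) _
        (ENNReal.mul_ne_top (hGnt _) (hGnt _))]
      congr 1
      exact inner3 (u + p1.1 + p1.2)
    calc (∫⁻ p1 : E × E, ∫⁻ p2 : E × E,
          (G p1.1 * G p1.2) * (G (u + p1.1 + p1.2 - p2.1 - p2.2) * G p2.2))
        = ∫⁻ p1 : E × E, (G p1.1 * G p1.2) * (I * I) := by
          apply lintegral_congr; intro p1; exact h1 p1
    _ = (I * I) * (I * I) := by
        rw [lintegral_mul_const' (I * I) _ hII, hI2]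
  have hP4 : ∫⁻ z : (E × E) × (E × E),
      (G z.1.1 * G z.1.2) * (G (u + z.1.1 + z.1.2 - z.2.1 - z.2.2) * G z.2.1)
        = (I * I) * (I * I) := by
    rw [Measure.volume_eq_prod, lintegral_prod _ (by fun_prop)]
    have h1 : ∀ p1 : E × E,
        (∫⁻ p2 : E × E, (G p1.1 * G p1.2) * (G (u + p1.1 + p1.2 - p2.1 - p2.2) * G p2.1))
          = (G p1.1 * G p1.2) * (I * I) := by
      intro p1
      rw [lintegral_const_mul' (G p1.1 * G p1.2) _
        (ENNReal.mul_ne_top (hGnt _) (hGnt _))]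
      congr 1
      exact inner4 (u + p1.1 + p1.2)
    calc (∫⁻ p1 : E × E, ∫⁻ p2 : E × E,
          (G p1.1 * G p1.2) * (G (u + p1.1 + p1.2 - p2.1 - p2.2) * G p2.1))
        = ∫⁻ p1 : E × E, (G p1.1 * G p1.2) * (I * I) := by
          apply lintegral_congr; intro p1; exact h1 p1
    _ = (I * I) * (I * I) := by
        rw [lintegral_mul_const' (I * I) _ hII, hI2]
  -- pointwise bound
  have hpt : ∀ z : (E × E) × (E × E),
      ENNReal.ofReal (jap u ^ (2 * α) *
        (jap (u + z.1.1 + z.1.2 - z.2.1 - z.2.2) ^ (-(2 * α)) *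
          jap z.1.1 ^ (-(2 * α)) * jap z.1.2 ^ (-(2 * α)) *
          jap z.2.1 ^ (-(2 * α)) * jap z.2.2 ^ (-(2 * α)))) ≤
      c * ((G z.1.1 * G z.1.2) * (G z.2.1 * G z.2.2)
        + (G (u + z.1.1 + z.1.2 - z.2.1 - z.2.2) * G z.1.2) * (G z.2.1 * G z.2.2)
        + (G (u + z.1.1 + z.1.2 - z.2.1 - z.2.2) * G z.1.1) * (G z.2.1 * G z.2.2)
        + (G z.1.1 * G z.1.2) * (G (u + z.1.1 + z.1.2 - z.2.1 - z.2.2) * G z.2.2)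
        + (G z.1.1 * G z.1.2) * (G (u + z.1.1 + z.1.2 - z.2.1 - z.2.2) * G z.2.1)) := by
    rintro ⟨⟨q1, q2⟩, q3, q4⟩
    simp only
    set x0 : E := u + q1 + q2 - q3 - q4 with hx0
    have hnorm : jap u ≤ 2 * (jap x0 + jap q1 + jap q2 + jap q3 + jap q4) := by
      have hu : u = x0 - q1 - q2 + q3 + q4 := by rw [hx0]; abel
      have h1 : ‖u‖ ≤ ‖x0‖ + ‖q1‖ + ‖q2‖ + ‖q3‖ + ‖q4‖ := by
        calc ‖u‖ = ‖x0 - q1 - q2 + q3 + q4‖ := by rw [← hu]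
        _ ≤ ‖x0 - q1 - q2 + q3‖ + ‖q4‖ := norm_add_le _ _
        _ ≤ (‖x0 - q1 - q2‖ + ‖q3‖) + ‖q4‖ := by gcongr; exact norm_add_le _ _
        _ ≤ ((‖x0 - q1‖ + ‖q2‖) + ‖q3‖) + ‖q4‖ := by gcongr; exact norm_sub_le _ _
        _ ≤ (((‖x0‖ + ‖q1‖) + ‖q2‖) + ‖q3‖) + ‖q4‖ := by gcongr; exact norm_sub_le _ _
      have h2 := jap_le_one_add u
      have h3 := norm_le_jap x0
      have h4 := norm_le_jap q1
      have h5 := norm_le_jap q2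
      have h6 := norm_le_jap q3
      have h7 := norm_le_jap q4
      have h8 := one_le_jap_s3 x0
      have h9 := one_le_jap_s3 q1
      have h10 := one_le_jap_s3 q2
      have h11 := one_le_jap_s3 q3
      have h12 := one_le_jap_s3 q4
      linarith
    have hcore := core_ineq hr (jap_pos_s3 u).le (one_le_jap_s3 x0) (one_le_jap_s3 q1)
      (one_le_jap_s3 q2) (one_le_jap_s3 q3) (one_le_jap_s3 q4) hnorm
    refine le_trans (ENNReal.ofReal_le_ofReal hcore) (le_of_eq ?_)
    have n0 : 0 ≤ jap x0 ^ (-(2 * α)) := Real.rpow_nonneg (jap_pos_s3 x0).le _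
    have n1 : 0 ≤ jap q1 ^ (-(2 * α)) := Real.rpow_nonneg (jap_pos_s3 q1).le _
    have n2 : 0 ≤ jap q2 ^ (-(2 * α)) := Real.rpow_nonneg (jap_pos_s3 q2).le _
    have n3 : 0 ≤ jap q3 ^ (-(2 * α)) := Real.rpow_nonneg (jap_pos_s3 q3).le _
    have n4 : 0 ≤ jap q4 ^ (-(2 * α)) := Real.rpow_nonneg (jap_pos_s3 q4).le _
    have s0 : 0 ≤ jap q1 ^ (-(2 * α)) * jap q2 ^ (-(2 * α)) * jap q3 ^ (-(2 * α))
        * jap q4 ^ (-(2 * α)) := mul_nonneg (mul_nonneg (mul_nonneg n1 n2) n3) n4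
    have s1 : 0 ≤ jap x0 ^ (-(2 * α)) * jap q2 ^ (-(2 * α)) * jap q3 ^ (-(2 * α))
        * jap q4 ^ (-(2 * α)) := mul_nonneg (mul_nonneg (mul_nonneg n0 n2) n3) n4
    have s2 : 0 ≤ jap x0 ^ (-(2 * α)) * jap q1 ^ (-(2 * α)) * jap q3 ^ (-(2 * α))
        * jap q4 ^ (-(2 * α)) := mul_nonneg (mul_nonneg (mul_nonneg n0 n1) n3) n4
    have s3 : 0 ≤ jap x0 ^ (-(2 * α)) * jap q1 ^ (-(2 * α)) * jap q2 ^ (-(2 * α))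
        * jap q4 ^ (-(2 * α)) := mul_nonneg (mul_nonneg (mul_nonneg n0 n1) n2) n4
    have s4 : 0 ≤ jap x0 ^ (-(2 * α)) * jap q1 ^ (-(2 * α)) * jap q2 ^ (-(2 * α))
        * jap q3 ^ (-(2 * α)) := mul_nonneg (mul_nonneg (mul_nonneg n0 n1) n2) n3
    rw [hc, hGdef]
    simp only
    rw [ENNReal.ofReal_mul (by positivity),
      ENNReal.ofReal_add (by linarith [s0, s1, s2, s3]) s4,
      ENNReal.ofReal_add (by linarith [s0, s1, s2]) s3,
      ENNReal.ofReal_add (by linarith [s0, s1]) s2,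
      ENNReal.ofReal_add s0 s1,
      ofReal_prod4 n1 n2 n3 n4, ofReal_prod4 n0 n2 n3 n4, ofReal_prod4 n0 n1 n3 n4,
      ofReal_prod4 n0 n1 n2 n4, ofReal_prod4 n0 n1 n2 n3]
    ring
  -- put everything together
  have hmeasP0 : Measurable fun z : (E × E) × (E × E) =>
      (G z.1.1 * G z.1.2) * (G z.2.1 * G z.2.2) := by fun_prop
  have hmeasP1 : Measurable fun z : (E × E) × (E × E) =>
      (G (u + z.1.1 + z.1.2 - z.2.1 - z.2.2) * G z.1.2) * (G z.2.1 * G z.2.2) := by fun_prop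
  have hmeasP2 : Measurable fun z : (E × E) × (E × E) =>
      (G (u + z.1.1 + z.1.2 - z.2.1 - z.2.2) * G z.1.1) * (G z.2.1 * G z.2.2) := by fun_prop
  have hmeasP3 : Measurable fun z : (E × E) × (E × E) =>
      (G z.1.1 * G z.1.2) * (G (u + z.1.1 + z.1.2 - z.2.1 - z.2.2) * G z.2.2) := by fun_prop
  calc (∫⁻ z : (E × E) × (E × E),
      ENNReal.ofReal (jap u ^ (2 * α) *
        (jap (u + z.1.1 + z.1.2 - z.2.1 - z.2.2) ^ (-(2 * α)) *
          jap z.1.1 ^ (-(2 * α)) * jap z.1.2 ^ (-(2 * α)) *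
          jap z.2.1 ^ (-(2 * α)) * jap z.2.2 ^ (-(2 * α)))))
      ≤ ∫⁻ z : (E × E) × (E × E),
        c * ((G z.1.1 * G z.1.2) * (G z.2.1 * G z.2.2)
          + (G (u + z.1.1 + z.1.2 - z.2.1 - z.2.2) * G z.1.2) * (G z.2.1 * G z.2.2)
          + (G (u + z.1.1 + z.1.2 - z.2.1 - z.2.2) * G z.1.1) * (G z.2.1 * G z.2.2)
          + (G z.1.1 * G z.1.2) * (G (u + z.1.1 + z.1.2 - z.2.1 - z.2.2) * G z.2.2)
          + (G z.1.1 * G z.1.2) * (G (u + z.1.1 + z.1.2 - z.2.1 - z.2.2) * G z.2.1)) :=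
      lintegral_mono hpt
  _ = c * (((I * I) * (I * I)) + ((I * I) * (I * I)) + ((I * I) * (I * I))
        + ((I * I) * (I * I)) + ((I * I) * (I * I))) := by
      rw [lintegral_const_mul' c _ hcnt,
        lintegral_add_left (((hmeasP0.fun_add hmeasP1).fun_add hmeasP2).fun_add hmeasP3),
        lintegral_add_left ((hmeasP0.fun_add hmeasP1).fun_add hmeasP2),
        lintegral_add_left (hmeasP0.fun_add hmeasP1),
        lintegral_add_left hmeasP0,
        hP0, hP1, hP2, hP3, hP4]
  _ = c * (5 * ((I * I) * (I * I))) := by ring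
  _ ≤ ENNReal.ofReal ((c * (5 * ((I * I) * (I * I)))).toReal + 1) := by
      conv_lhs => rw [← ENNReal.ofReal_toReal hBnt]
      exact ENNReal.ofReal_le_ofReal (le_add_of_nonneg_right zero_le_one)
end

section
/- For every real α with 0 < α < 1 there exist constants c₁ > 0 and c₂ > 0 such that, setting h(u) = c₁ e^{-c₂ ‖u‖²} for u ∈ ℝ², one has for every q ∈ ℝ²: (1 + ‖q‖²)^{-α} ≤ ∫_{ℝ²} h(y) ‖q − y‖^{-2α} dy. -/
open MeasureTheory

/-- For every `0 < α < 1` there are `c₁, c₂ > 0` such that, with the Gaussian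
`h(u) = c₁ e^{-c₂‖u‖²}` on `ℝ²`, the pointwise bound
`(1 + ‖q‖²)^{-α} ≤ (h ∗ ‖·‖^{-2α})(q) = ∫ h(y) ‖q − y‖^{-2α} dy` holds for every `q ∈ ℝ²`. -/
theorem statement6 (α : ℝ) (h0 : 0 < α) (h1 : α < 1) :
    ∃ c₁ c₂ : ℝ, 0 < c₁ ∧ 0 < c₂ ∧ ∀ q : EuclideanSpace ℝ (Fin 2),
      ENNReal.ofReal ((1 + ‖q‖ ^ 2) ^ (-α)) ≤
        ∫⁻ y : EuclideanSpace ℝ (Fin 2),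
          ENNReal.ofReal (c₁ * Real.exp (-c₂ * ‖y‖ ^ 2) * ‖q - y‖ ^ (-(2 * α))) := by
  set E := EuclideanSpace ℝ (Fin 2)
  set V : ENNReal := volume (Metric.ball (0 : E) 1) with hV
  have hVpos : 0 < V := Metric.measure_ball_pos _ _ one_pos
  have hVlt : V < ⊤ := measure_ball_lt_top
  have hVr : 0 < V.toReal := ENNReal.toReal_pos hVpos.ne' hVlt.ne
  refine ⟨2 * Real.exp 1 / V.toReal, 1, by positivity, one_pos, fun q => ?_⟩
  set c₁ : ℝ := 2 * Real.exp 1 / V.toReal with hc₁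
  set a : ℝ := 1 + ‖q‖ with ha
  have hapos : (0 : ℝ) < a := by positivity
  set C : ℝ := 2 / V.toReal * a ^ (-(2 * α)) with hC
  have hCpos : 0 < C := by positivity
  -- pointwise bound on the ball
  have hptwise : ∀ᵐ y ∂(volume.restrict (Metric.ball (0 : E) 1)),
      ENNReal.ofReal C ≤
        ENNReal.ofReal (c₁ * Real.exp (-1 * ‖y‖ ^ 2) * ‖q - y‖ ^ (-(2 * α))) := by
    have hne : ∀ᵐ y : E, y ≠ q := by
      refine ae_iff.mpr ?_
      simpa using measure_singleton (μ := (volume : Measure E)) q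
    have hne' : ∀ᵐ y ∂(volume.restrict (Metric.ball (0 : E) 1)), y ≠ q :=
      hne.filter_mono (ae_mono Measure.restrict_le_self)
    filter_upwards [hne', ae_restrict_mem measurableSet_ball] with y hyq hymem
    apply ENNReal.ofReal_le_ofReal
    have hynorm : ‖y‖ < 1 := by simpa using hymem
    have hqy : 0 < ‖q - y‖ := by
      rw [norm_sub_pos_iff]; exact Ne.symm hyq
    have hqya : ‖q - y‖ ≤ a := by
      calc ‖q - y‖ ≤ ‖q‖ + ‖y‖ := norm_sub_le _ _
        _ ≤ ‖q‖ + 1 := by linarith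
        _ = a := by rw [ha]; ring
    have hrpow : a ^ (-(2 * α)) ≤ ‖q - y‖ ^ (-(2 * α)) :=
      Real.rpow_le_rpow_of_nonpos hqy hqya (by nlinarith)
    have hexp : Real.exp (-1) ≤ Real.exp (-1 * ‖y‖ ^ 2) := by
      apply Real.exp_le_exp.mpr
      nlinarith [norm_nonneg y]
    have hcexp : 2 / V.toReal ≤ c₁ * Real.exp (-1 * ‖y‖ ^ 2) := by
      have : c₁ * Real.exp (-1) = 2 / V.toReal := by
        rw [hc₁, Real.exp_neg]
        field_simp
      calc 2 / V.toReal = c₁ * Real.exp (-1) := this.symm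
        _ ≤ c₁ * Real.exp (-1 * ‖y‖ ^ 2) := by
            apply mul_le_mul_of_nonneg_left hexp (by positivity)
    calc C = 2 / V.toReal * a ^ (-(2 * α)) := rfl
      _ ≤ (c₁ * Real.exp (-1 * ‖y‖ ^ 2)) * (‖q - y‖ ^ (-(2 * α))) := by
          apply mul_le_mul hcexp hrpow (by positivity) (by positivity)
  -- lower bound the integral
  have hint : ENNReal.ofReal C * V ≤
      ∫⁻ y : E, ENNReal.ofReal (c₁ * Real.exp (-1 * ‖y‖ ^ 2) * ‖q - y‖ ^ (-(2 * α))) := by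
    calc ENNReal.ofReal C * V
        = ∫⁻ _ in Metric.ball (0 : E) 1, ENNReal.ofReal C := by
          rw [setLIntegral_const]
      _ ≤ ∫⁻ y in Metric.ball (0 : E) 1,
            ENNReal.ofReal (c₁ * Real.exp (-1 * ‖y‖ ^ 2) * ‖q - y‖ ^ (-(2 * α))) :=
          lintegral_mono_ae hptwise
      _ ≤ _ := setLIntegral_le_lintegral _ _
  refine le_trans ?_ hint
  -- the real inequality
  have key : (1 + ‖q‖ ^ 2) ^ (-α) ≤ C * V.toReal := by
    have hCV : C * V.toReal = 2 * a ^ (-(2 * α)) := by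
      rw [hC]; field_simp
    rw [hCV]
    have h2 : a ^ (-(2 * α)) = (a ^ 2) ^ (-α) := by
      rw [← Real.rpow_natCast a 2, ← Real.rpow_mul hapos.le]
      norm_num
    have hsq : a ^ 2 ≤ 2 * (1 + ‖q‖ ^ 2) := by
      rw [ha]; nlinarith [norm_nonneg q, sq_nonneg (‖q‖ - 1)]
    have h3 : (2 * (1 + ‖q‖ ^ 2)) ^ (-α) ≤ (a ^ 2) ^ (-α) :=
      Real.rpow_le_rpow_of_nonpos (by positivity) hsq (by linarith)
    have h4 : (2 * (1 + ‖q‖ ^ 2)) ^ (-α) = (2 : ℝ) ^ (-α) * (1 + ‖q‖ ^ 2) ^ (-α) :=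
      Real.mul_rpow (by norm_num) (by positivity)
    have h5 : (1 / 2 : ℝ) ≤ (2 : ℝ) ^ (-α) := by
      have := Real.rpow_le_rpow_of_exponent_le (x := 2) (by norm_num)
        (by linarith : (-1 : ℝ) ≤ -α)
      rwa [Real.rpow_neg_one, ← one_div] at this
    have hq0 : (0 : ℝ) < (1 + ‖q‖ ^ 2) ^ (-α) := by positivity
    nlinarith [h3, h4, h5]
  calc ENNReal.ofReal ((1 + ‖q‖ ^ 2) ^ (-α)) ≤ ENNReal.ofReal (C * V.toReal) :=
        ENNReal.ofReal_le_ofReal key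
    _ = ENNReal.ofReal C * ENNReal.ofReal V.toReal :=
        ENNReal.ofReal_mul hCpos.le
    _ = ENNReal.ofReal C * V := by rw [ENNReal.ofReal_toReal hVlt.ne]
end

section
/- For all integers r ≥ 1 and n ≥ 1, the number of monotone nondecreasing functions μ : {1, …, n} → ℕ satisfying 1 ≤ μ(j) ≤ r + 2j − 2 for every j ∈ {1, …, n} is at most 2^{r + 3n − 2}. -/
/-- The number of monotone nondecreasing functions `μ : {1,…,n} → ℕ` with
`1 ≤ μ(j) ≤ r + 2j − 2` for every `j` is at most `2^{r+3n−2}`. Here the domain `{1,…,n}`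
is modelled by `Fin n`, with `i : Fin n` corresponding to `j = i + 1`, so the upper
constraint reads `μ i ≤ r + 2i`. -/
theorem statement8 (r n : ℕ) (hr : 1 ≤ r) (hn : 1 ≤ n) :
    {μ : Fin n → ℕ | Monotone μ ∧ ∀ i : Fin n, 1 ≤ μ i ∧ μ i ≤ r + 2 * (i : ℕ)}.Finite ∧
    {μ : Fin n → ℕ | Monotone μ ∧ ∀ i : Fin n, 1 ≤ μ i ∧ μ i ≤ r + 2 * (i : ℕ)}.ncard ≤
      2 ^ (r + 3 * n - 2) := by
  set S := {μ : Fin n → ℕ | Monotone μ ∧ ∀ i : Fin n, 1 ≤ μ i ∧ μ i ≤ r + 2 * (i : ℕ)}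
    with hS
  have hfin : S.Finite := by
    apply Set.Finite.subset (Set.Finite.pi (fun i : Fin n => Set.finite_Iic (r + 2 * (i : ℕ))))
    intro μ hμ
    simp only [Set.mem_pi, Set.mem_univ, Set.mem_Iic, forall_true_left]
    exact fun i => (hμ.2 i).2
  refine ⟨hfin, ?_⟩
  -- encode each μ as the finset of values μ i + i
  set F : (Fin n → ℕ) → Finset ℕ := fun μ => Finset.image (fun i => μ i + (i : ℕ)) Finset.univ
    with hF
  have hsm : ∀ μ ∈ S, StrictMono (fun i : Fin n => μ i + (i : ℕ)) := by
    intro μ hμ i j hij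
    exact Nat.add_lt_add_of_le_of_lt (hμ.1 hij.le) (by exact_mod_cast hij)
  have hcard : ∀ μ ∈ S, (F μ).card = n := by
    intro μ hμ
    rw [hF]
    rw [Finset.card_image_of_injective _ (hsm μ hμ).injective, Finset.card_univ,
      Fintype.card_fin]
  have hinj : Set.InjOn F S := by
    intro μ hμ μ' hμ' h
    have h1 := Finset.orderEmbOfFin_unique (hcard μ hμ)
      (f := fun i => μ i + (i : ℕ))
      (fun x => Finset.mem_image_of_mem _ (Finset.mem_univ x)) (hsm μ hμ)
    have h2 := Finset.orderEmbOfFin_unique (h ▸ hcard μ' hμ')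
      (f := fun i => μ' i + (i : ℕ))
      (fun x => h ▸ Finset.mem_image_of_mem _ (Finset.mem_univ x)) (hsm μ' hμ')
    funext i
    have : μ i + (i : ℕ) = μ' i + (i : ℕ) := by
      have e1 := congrFun h1 i
      have e2 := congrFun h2 i
      rw [e1, e2]
    omega
  have hsub : F '' S ⊆ ↑((Finset.Icc 1 (r + 3 * n - 3)).powerset) := by
    rintro _ ⟨μ, hμ, rfl⟩
    simp only [Finset.coe_powerset, Set.mem_preimage, Set.mem_powerset_iff, Finset.coe_subset,
      Finset.mem_coe]
    intro x hx
    simp only [hF, Finset.mem_image, Finset.mem_univ, true_and] at hx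
    obtain ⟨i, rfl⟩ := hx
    have h1 := (hμ.2 i).1
    have h2 := (hμ.2 i).2
    have h3 : (i : ℕ) < n := i.2
    simp only [Finset.mem_Icc]
    omega
  calc S.ncard = (F '' S).ncard := (Set.ncard_image_of_injOn hinj).symm
    _ ≤ (↑((Finset.Icc 1 (r + 3 * n - 3)).powerset) : Set (Finset ℕ)).ncard :=
        Set.ncard_le_ncard hsub ((Finset.Icc 1 (r + 3 * n - 3)).powerset).finite_toSet
    _ = 2 ^ (r + 3 * n - 3) := by
        rw [Set.ncard_coe_finset, Finset.card_powerset, Nat.card_Icc]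
        norm_num
    _ ≤ 2 ^ (r + 3 * n - 2) := Nat.pow_le_pow_right (by norm_num) (by omega)
end
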